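/- arXiv:1404.6045 — 2 statements merged into one kernel-verified Lean document; each statement's English description precedes it below -/
import Mathlib

section
/- Let $X_1, \dots, X_n$ be random variables such that for every subset $I \subset \{1,\dots,n\}$ and all $u_i \ge C_2$ ($i \in I$) one has $\mathbb{P}(\bigcap_{i \in I} \{|X_i| \ge C_1 u_i\}) \le \exp(-\sum_{i \in I} u_i)$. Let $\mathcal{E}_1, \dots, \mathcal{E}_n$ be independent symmetric standard exponential random variables ($\mathbb{P}(|\mathcal{E}_i| \ge u) = e^{-u}$ for $u \ge 0$). Then for every $I \subset \{1,\dots,n\}$ and nonnegative integers $k_i$, $\mathbb{E}\big[\prod_{i \in I} |X_i|^{2k_i} \prod_{i \in I} 1_{\{|X_i| > C_1 C_2\}}\big] \le C_1^{2\sum_{i \in I} k_i} \, \mathbb{E} \prod_{i \in I} |\mathcal{E}_i|^{2k_i}$. -/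
open MeasureTheory Real ProbabilityTheory
open scoped ProbabilityTheory

open Set
open scoped ENNReal Nat

/-! Let `Z i = |X i| / C1` on the event `C1 * C2 < |X i|` and `Z i = 0` elsewhere. The tail
hypothesis gives `ℙ (∀ i ∈ R, u i ≤ Z i) ≤ exp (-∑ i ∈ R, u i)` for all positive levels `u`:
the joint tails of `Z` are dominated by those of independent standard exponentials. Peel off one
coordinate `j` at a time with the layer-cake formula
`E[Y ^ m * F] = ∫₀^∞ m t ^ (m - 1) E[F; t ≤ Y] dt`; the measure `e ^ t • ℙ` restricted to
`{t ≤ Z j}` again has dominated tails in the remaining coordinates, so induction bounds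
`E[F; t ≤ Z j]` by `e ^ (-t)` times the remaining product of factorials, and
`∫₀^∞ m t ^ (m - 1) e ^ (-t) dt = m!`. Hence `E ∏ Z i ^ m i ≤ ∏ (m i)!`, while the same formula
and independence give `E ∏ |E i| ^ m i = ∏ (m i)!`. -/

lemma ofReal_mul_lintegral_exp_neg_mul_rpow {m : ℕ} (hm : m ≠ 0) :
    ENNReal.ofReal m * ∫⁻ t in Ioi (0 : ℝ), ENNReal.ofReal (exp (-t) * t ^ ((m : ℝ) - 1))
      = m ! := by
  have hm' : (0 : ℝ) < m := by positivity
  rw [← ofReal_integral_eq_lintegral_ofReal (GammaIntegral_convergent hm')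
      (ae_restrict_of_forall_mem measurableSet_Ioi fun t ht => by
        have : (0 : ℝ) < t := ht
        positivity),
    ← Gamma_eq_integral hm', ← ENNReal.ofReal_mul hm'.le, ← Gamma_add_one hm'.ne',
    Gamma_nat_eq_factorial, ENNReal.ofReal_natCast]

section LayerCake

variable {α : Type*} [MeasurableSpace α] {μ : Measure α} {Y : α → ℝ}

lemma lintegral_ofReal_pow_eq_lintegral_meas_le_mul (hY0 : ∀ a, 0 ≤ Y a) (hY : Measurable Y) {m : ℕ}
    (hm : m ≠ 0) :
    ∫⁻ a, ENNReal.ofReal (Y a ^ m) ∂μ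
      = ENNReal.ofReal m *
          ∫⁻ t in Ioi 0, μ {a | t ≤ Y a} * ENNReal.ofReal (t ^ ((m : ℝ) - 1)) := by
  simpa only [Real.rpow_natCast] using
    lintegral_rpow_eq_lintegral_meas_le_mul μ (ae_of_all _ hY0) hY.aemeasurable
      (p := m) (by positivity)

lemma lintegral_ofReal_pow_le_factorial_mul (hY0 : ∀ a, 0 ≤ Y a) (hY : Measurable Y)
    {P : ℝ≥0∞} (htail : ∀ t > 0, μ {a | t ≤ Y a} ≤ ENNReal.ofReal (exp (-t)) * P)
    {m : ℕ} (hm : m ≠ 0) :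
    ∫⁻ a, ENNReal.ofReal (Y a ^ m) ∂μ ≤ m ! * P := by
  calc ∫⁻ a, ENNReal.ofReal (Y a ^ m) ∂μ
      ≤ ENNReal.ofReal m *
          ∫⁻ t in Ioi 0, P * ENNReal.ofReal (exp (-t) * t ^ ((m : ℝ) - 1)) := by
        rw [lintegral_ofReal_pow_eq_lintegral_meas_le_mul hY0 hY hm]
        gcongr ENNReal.ofReal m * ?_
        refine setLIntegral_mono (by fun_prop) fun t ht => ?_
        rw [ENNReal.ofReal_mul (exp_pos _).le, ← mul_assoc, mul_comm P]
        gcongr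
        exact htail t ht
    _ = m ! * P := by
        rw [lintegral_const_mul _ (by fun_prop), mul_left_comm,
          ofReal_mul_lintegral_exp_neg_mul_rpow hm, mul_comm]

lemma lintegral_ofReal_pow_eq_factorial (hY0 : ∀ a, 0 ≤ Y a) (hY : Measurable Y)
    (htail : ∀ t ≥ 0, μ {a | t ≤ Y a} = ENNReal.ofReal (exp (-t))) (m : ℕ) :
    ∫⁻ a, ENNReal.ofReal (Y a ^ m) ∂μ = m ! := by
  rcases eq_or_ne m 0 with rfl | hm
  · simpa [hY0] using htail 0 le_rfl
  rw [lintegral_ofReal_pow_eq_lintegral_meas_le_mul hY0 hY hm,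
    ← ofReal_mul_lintegral_exp_neg_mul_rpow hm]
  congr 1
  refine setLIntegral_congr_fun measurableSet_Ioi fun t ht => ?_
  rw [htail t ht.le, ENNReal.ofReal_mul (exp_pos _).le]

end LayerCake

section Tails

variable {Ω ι : Type*} [MeasurableSpace Ω]

def ExpDominatedTails (μ : Measure Ω) (Z : ι → Ω → ℝ) (J : Finset ι) : Prop :=
  ∀ R ⊆ J, ∀ u : ι → ℝ, (∀ i ∈ R, 0 < u i) →
    μ {ω | ∀ i ∈ R, u i ≤ Z i ω} ≤ ENNReal.ofReal (exp (-∑ i ∈ R, u i))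

namespace ExpDominatedTails

variable {μ : Measure Ω} {Z : ι → Ω → ℝ} {J : Finset ι}

lemma mono {J' : Finset ι} (h : ExpDominatedTails μ Z J) (hJ : J' ⊆ J) :
    ExpDominatedTails μ Z J' :=
  fun R hR => h R (hR.trans hJ)

lemma measure_univ_le_one (h : ExpDominatedTails μ Z J) : μ univ ≤ 1 := by
  simpa using h ∅ (Finset.empty_subset J) 0 (by simp)

lemma smul_restrict [DecidableEq ι] {j : ι} (h : ExpDominatedTails μ Z (insert j J))
    (hj : j ∉ J) (hZj : Measurable (Z j)) {t : ℝ} (ht : 0 < t) :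
    ExpDominatedTails (ENNReal.ofReal (exp t) • μ.restrict {ω | t ≤ Z j ω}) Z J := by
  intro R hR u hu
  have hjR : j ∉ R := fun hjR => hj (hR hjR)
  have hset : {ω | ∀ i ∈ R, u i ≤ Z i ω} ∩ {ω | t ≤ Z j ω}
      = {ω | ∀ i ∈ insert j R, Function.update u j t i ≤ Z i ω} := by
    ext ω
    simp only [mem_inter_iff, mem_ofPred_eq, Finset.forall_mem_insert, Function.update_self]
    rw [and_comm]
    refine and_congr_right' (forall₂_congr fun i hi => ?_)
    rw [Function.update_of_ne (ne_of_mem_of_not_mem hi hjR)]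
  have hsum : ∑ i ∈ insert j R, Function.update u j t i = t + ∑ i ∈ R, u i := by
    rw [Finset.sum_insert hjR, Function.update_self, Finset.sum_update_of_notMem hjR]
  have hu_update : ∀ i ∈ insert j R, 0 < Function.update u j t i := by
    simp only [Finset.forall_mem_insert, Function.update_self]
    refine ⟨ht, fun i hi => ?_⟩
    rw [Function.update_of_ne (ne_of_mem_of_not_mem hi hjR)]
    exact hu i hi
  rw [Measure.smul_apply, Measure.restrict_apply' (measurableSet_le measurable_const hZj), hset,
    smul_eq_mul]
  calc ENNReal.ofReal (exp t) * μ {ω | ∀ i ∈ insert j R, Function.update u j t i ≤ Z i ω}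
      ≤ ENNReal.ofReal (exp t) * ENNReal.ofReal (exp (-(t + ∑ i ∈ R, u i))) := by
        rw [← hsum]
        gcongr
        exact h _ (Finset.insert_subset_insert j hR) _ hu_update
    _ = ENNReal.ofReal (exp (-∑ i ∈ R, u i)) := by
        rw [← ENNReal.ofReal_mul (exp_pos _).le, ← exp_add]
        ring_nf

lemma lintegral_prod_ofReal_pow_le (h : ExpDominatedTails μ Z J) (hZ : ∀ i, Measurable (Z i))
    (hZ0 : ∀ i ω, 0 ≤ Z i ω) (m : ι → ℕ) :
    ∫⁻ ω, ∏ i ∈ J, ENNReal.ofReal (Z i ω ^ m i) ∂μ ≤ ∏ i ∈ J, ((m i)! : ℝ≥0∞) := by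
  classical
  induction J using Finset.induction_on generalizing μ with
  | empty => simpa using h.measure_univ_le_one
  | insert j J hj ih =>
    set F : Ω → ℝ≥0∞ := fun ω => ∏ i ∈ J, ENNReal.ofReal (Z i ω ^ m i)
    have hF : Measurable F := Finset.measurable_prod J fun i _ => by fun_prop
    simp only [Finset.prod_insert hj]
    rcases eq_or_ne (m j) 0 with hmj | hmj
    · simpa [hmj] using ih (h.mono (Finset.subset_insert j J))
    have hFtail : ∀ t > 0, μ.withDensity F {ω | t ≤ Z j ω}
        ≤ ENNReal.ofReal (exp (-t)) * ∏ i ∈ J, ((m i)! : ℝ≥0∞) := by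
      intro t ht
      have hscaled := ih (h.smul_restrict hj (hZ j) ht)
      rw [lintegral_smul_measure, smul_eq_mul] at hscaled
      rw [withDensity_apply _ (measurableSet_le measurable_const (hZ j))]
      calc ∫⁻ ω in {ω | t ≤ Z j ω}, F ω ∂μ
          = ENNReal.ofReal (exp (-t)) *
              (ENNReal.ofReal (exp t) * ∫⁻ ω in {ω | t ≤ Z j ω}, F ω ∂μ) := by
            rw [← mul_assoc, ← ENNReal.ofReal_mul (exp_pos _).le, ← exp_add, neg_add_cancel,
              exp_zero, ENNReal.ofReal_one, one_mul]
        _ ≤ _ := by gcongr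
    calc ∫⁻ ω, ENNReal.ofReal (Z j ω ^ m j) * F ω ∂μ
        = ∫⁻ ω, ENNReal.ofReal (Z j ω ^ m j) ∂μ.withDensity F := by
          rw [lintegral_withDensity_eq_lintegral_mul _ hF (by fun_prop)]
          simp only [Pi.mul_apply, mul_comm]
      _ ≤ _ := lintegral_ofReal_pow_le_factorial_mul (hZ0 j) (hZ j) hFtail hmj

end ExpDominatedTails

lemma expDominatedTails_of_tail_le {μ : Measure Ω} {X : ι → Ω → ℝ} {C1 C2 : ℝ} (hC1 : 0 < C1)
    (htail : ∀ I : Finset ι, ∀ u : ι → ℝ, (∀ i ∈ I, C2 ≤ u i) →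
      μ {ω | ∀ i ∈ I, C1 * u i ≤ |X i ω|} ≤ ENNReal.ofReal (exp (-(∑ i ∈ I, u i))))
    (J : Finset ι) :
    ExpDominatedTails μ (fun i ω => if C1 * C2 < |X i ω| then |X i ω| / C1 else 0) J := by
  intro R _ u hu
  calc μ {ω | ∀ i ∈ R, u i ≤ if C1 * C2 < |X i ω| then |X i ω| / C1 else 0}
      ≤ μ {ω | ∀ i ∈ R, C1 * max (u i) C2 ≤ |X i ω|} := by
        refine measure_mono fun ω hω i hi => ?_
        have hui := hω i hi
        split_ifs at hui with hX
        · rw [mul_max_of_nonneg _ _ hC1.le]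
          exact max_le ((le_div_iff₀' hC1).mp hui) hX.le
        · exact absurd hui (hu i hi).not_ge
    _ ≤ ENNReal.ofReal (exp (-∑ i ∈ R, max (u i) C2)) := htail R _ fun i _ => le_max_right _ _
    _ ≤ ENNReal.ofReal (exp (-∑ i ∈ R, u i)) := by
        gcongr with i
        exact le_max_left _ _

lemma prod_pow_mul_prod_ite_le {s : Finset ι} {x : ι → ℝ} (hx : ∀ i, 0 ≤ x i) {c : ℝ}
    (hc : 0 < c) (a : ℝ) (m : ι → ℕ) :
    (∏ i ∈ s, x i ^ m i) * ∏ i ∈ s, (if a < x i then (1 : ℝ) else 0)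
      ≤ c ^ (∑ i ∈ s, m i) * ∏ i ∈ s, (if a < x i then x i / c else 0) ^ m i := by
  rw [← Finset.prod_mul_distrib, ← Finset.prod_pow_eq_pow_sum, ← Finset.prod_mul_distrib]
  refine Finset.prod_le_prod (fun i _ => ?_) fun i _ => ?_ <;> split_ifs
  · simpa using pow_nonneg (hx i) (m i)
  · simp
  · rw [mul_one, div_pow, mul_div_cancel₀ _ (pow_ne_zero _ hc.ne')]
  · rw [mul_zero]
    positivity

lemma integral_prod_abs_pow_eq_prod_factorial {μ : Measure Ω} {E : ι → Ω → ℝ}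
    (hEm : ∀ i, Measurable (E i)) (hindep : iIndepFun E μ)
    (hexp : ∀ i, ∀ u : ℝ, 0 ≤ u → μ {ω | u ≤ |E i ω|} = ENNReal.ofReal (exp (-u)))
    (s : Finset ι) (m : ι → ℕ) :
    ∫ ω, ∏ i ∈ s, |E i ω| ^ m i ∂μ = ∏ i ∈ s, ((m i)! : ℝ) := by
  have hfactor : ∀ i, ∫⁻ ω, ENNReal.ofReal (|E i ω| ^ m i) ∂μ = (m i)! := fun i =>
    lintegral_ofReal_pow_eq_factorial (fun _ => abs_nonneg _) (hEm i).abs (hexp i) (m i)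
  rw [integral_eq_lintegral_of_nonneg_ae (ae_of_all _ fun ω => by positivity) (by fun_prop),
    lintegral_congr fun ω => ENNReal.ofReal_prod_of_nonneg fun i _ => by positivity,
    lintegral_prod_eq_prod_lintegral_of_indepFun s (fun i ω => ENNReal.ofReal (|E i ω| ^ m i))
      (hindep.comp (fun i x => ENNReal.ofReal (|x| ^ m i)) fun i => by fun_prop)
      (fun i => by fun_prop)]
  simp only [hfactor, ENNReal.toReal_prod, ENNReal.toReal_natCast]

lemma lintegral_prod_pow_mul_prod_ite_le {μ : Measure Ω} {X : ι → Ω → ℝ}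
    (hXm : ∀ i, Measurable (X i)) {C1 C2 : ℝ} (hC1 : 0 < C1)
    (htail : ∀ I : Finset ι, ∀ u : ι → ℝ, (∀ i ∈ I, C2 ≤ u i) →
      μ {ω | ∀ i ∈ I, C1 * u i ≤ |X i ω|} ≤ ENNReal.ofReal (exp (-(∑ i ∈ I, u i))))
    (I : Finset ι) (m : ι → ℕ) :
    ∫⁻ ω, ENNReal.ofReal ((∏ i ∈ I, |X i ω| ^ m i) *
        ∏ i ∈ I, (if C1 * C2 < |X i ω| then (1 : ℝ) else 0)) ∂μ
      ≤ ENNReal.ofReal (C1 ^ (∑ i ∈ I, m i)) * ∏ i ∈ I, ((m i)! : ℝ≥0∞) := by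
  set Z : ι → Ω → ℝ := fun i ω => if C1 * C2 < |X i ω| then |X i ω| / C1 else 0
  have hZ : ∀ i, Measurable (Z i) := fun i =>
    Measurable.ite (measurableSet_lt measurable_const (hXm i).abs) ((hXm i).abs.div_const C1)
      measurable_const
  have hZ0 : ∀ i ω, 0 ≤ Z i ω := fun i ω => by
    simp only [Z]
    split_ifs <;> positivity
  calc _ ≤ ∫⁻ ω, ENNReal.ofReal (C1 ^ (∑ i ∈ I, m i)) *
          ∏ i ∈ I, ENNReal.ofReal (Z i ω ^ m i) ∂μ := by
        refine lintegral_mono fun ω => ?_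
        rw [← ENNReal.ofReal_prod_of_nonneg (fun i _ => by positivity),
          ← ENNReal.ofReal_mul (by positivity)]
        exact ENNReal.ofReal_le_ofReal
          (prod_pow_mul_prod_ite_le (fun i => abs_nonneg _) hC1 _ _)
    _ ≤ _ := by
        rw [lintegral_const_mul' _ _ ENNReal.ofReal_ne_top]
        gcongr
        exact (expDominatedTails_of_tail_le hC1 htail I).lintegral_prod_ofReal_pow_le hZ hZ0 m

end Tails

theorem moment_domination_by_exponentials_general {Ω : Type*} [MeasureSpace Ω]
    {n : ℕ} (X E : Fin n → Ω → ℝ)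
    (hXm : ∀ i, Measurable (X i)) (hEm : ∀ i, Measurable (E i))
    (C1 C2 : ℝ) (hC1 : 1 ≤ C1)
    (htail : ∀ I : Finset (Fin n), ∀ u : Fin n → ℝ, (∀ i ∈ I, C2 ≤ u i) →
      ℙ {ω | ∀ i ∈ I, C1 * u i ≤ |X i ω|} ≤ ENNReal.ofReal (Real.exp (-(∑ i ∈ I, u i))))
    (hindep : iIndepFun E ℙ)
    (hexp : ∀ i, ∀ u : ℝ, 0 ≤ u → ℙ {ω | u ≤ |E i ω|} = ENNReal.ofReal (Real.exp (-u)))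
    (I : Finset (Fin n)) (k : Fin n → ℕ) :
    ∫ ω, (∏ i ∈ I, |X i ω| ^ (2 * k i)) *
        ∏ i ∈ I, (if C1 * C2 < |X i ω| then (1 : ℝ) else 0) ∂ℙ
      ≤ C1 ^ (2 * ∑ i ∈ I, k i) * ∫ ω, ∏ i ∈ I, |E i ω| ^ (2 * k i) ∂ℙ := by
  have hC1pos : 0 < C1 := zero_lt_one.trans_le hC1
  have hX : ∀ i, Measurable fun ω => |X i ω| := fun i => (hXm i).abs
  have hind : ∀ i, Measurable fun ω => if C1 * C2 < |X i ω| then (1 : ℝ) else 0 := fun i =>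
    Measurable.ite (measurableSet_lt measurable_const (hX i)) measurable_const measurable_const
  rw [integral_prod_abs_pow_eq_prod_factorial hEm hindep hexp, Finset.mul_sum,
    integral_eq_lintegral_of_nonneg_ae (ae_of_all _ fun ω => by positivity) (by fun_prop)]
  refine ENNReal.toReal_le_of_le_ofReal (by positivity) ?_
  calc _ ≤ ENNReal.ofReal (C1 ^ (∑ i ∈ I, 2 * k i)) * ∏ i ∈ I, ((2 * k i)! : ℝ≥0∞) :=
        lintegral_prod_pow_mul_prod_ite_le hXm hC1pos htail I _
    _ = _ := by
        rw [ENNReal.ofReal_mul (by positivity),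
          ENNReal.ofReal_prod_of_nonneg fun i _ => by positivity]
        simp only [ENNReal.ofReal_natCast]

theorem moment_domination_by_exponentials {Ω : Type*} [MeasureSpace Ω]
    [IsProbabilityMeasure (ℙ : Measure Ω)]
    {n : ℕ} (X E : Fin n → Ω → ℝ)
    (hXm : ∀ i, Measurable (X i)) (hEm : ∀ i, Measurable (E i))
    (C1 C2 : ℝ) (hC1 : 1 ≤ C1) (hC2 : 0 ≤ C2)
    (htail : ∀ I : Finset (Fin n), ∀ u : Fin n → ℝ, (∀ i ∈ I, C2 ≤ u i) →
      ℙ {ω | ∀ i ∈ I, C1 * u i ≤ |X i ω|} ≤ ENNReal.ofReal (Real.exp (-(∑ i ∈ I, u i))))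
    (hindep : iIndepFun E ℙ)
    (hexp : ∀ i, ∀ u : ℝ, 0 ≤ u → ℙ {ω | u ≤ |E i ω|} = ENNReal.ofReal (Real.exp (-u)))
    (I : Finset (Fin n)) (k : Fin n → ℕ) :
    ∫ ω, (∏ i ∈ I, |X i ω| ^ (2 * k i)) *
        ∏ i ∈ I, (if C1 * C2 < |X i ω| then (1 : ℝ) else 0) ∂ℙ
      ≤ C1 ^ (2 * ∑ i ∈ I, k i) * ∫ ω, ∏ i ∈ I, |E i ω| ^ (2 * k i) ∂ℙ :=
  moment_domination_by_exponentials_general X E hXm hEm C1 C2 hC1 htail hindep hexp I k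
end

section
/- Let $X = (X_1, \dots, X_n)$ be a random vector such that $u \mapsto -\log \mathbb{P}(X_1 \ge u_1, \dots, X_n \ge u_n)$ is a convex function of $u \in \mathbb{R}^n$ (which holds for log-concave $X$), and suppose $X$ is one-unconditional. If $z \in \mathbb{R}_+^n$ satisfies $\mathbb{P}(\bigcap_{i=1}^n \{X_i \ge z_i/2\}) \ge e^{-5p/2} (4\bar{C}_1)^{-n}$ with $n \le p$ and $\bar{C}_1 \ge 1$, then there exists a constant $\bar{C}_2$ (depending only on $\bar{C}_1$) such that $\mathbb{P}(\bigcap_{i=1}^n \{|X_i| \ge \bar{C}_2^{-1} z_i\}) \ge e^{-p}$. -/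
open MeasureTheory Real
open scoped ProbabilityTheory
open scoped ENNReal

theorem witness_rescaling {C1 : ℝ} (hC1 : 1 ≤ C1) :
    ∃ C2 : ℝ, 0 < C2 ∧
      ∀ (n : ℕ) (Ω : Type) [MeasureSpace Ω] [IsProbabilityMeasure (ℙ : Measure Ω)]
        (X : Ω → Fin n → ℝ) (z : Fin n → ℝ) (p : ℝ),
        Measurable X →
        ConvexOn ℝ Set.univ
          (fun u : Fin n → ℝ => -Real.log (ℙ {ω | ∀ i, u i ≤ X ω i}).toReal) →
        (∀ ε : Fin n → ℝ, (∀ i, ε i = 1 ∨ ε i = -1) →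
          Measure.map (fun ω i => ε i * X ω i) ℙ = Measure.map X ℙ) →
        (∀ i, 0 ≤ z i) → (n : ℝ) ≤ p →
        ENNReal.ofReal (Real.exp (-(5 * p / 2)) * (4 * C1)⁻¹ ^ n) ≤
          ℙ {ω | ∀ i, z i / 2 ≤ X ω i} →
        ENNReal.ofReal (Real.exp (-p)) ≤ ℙ {ω | ∀ i, C2⁻¹ * z i ≤ |X ω i|} := by
  have hlog2pos : 0 < Real.log 2 := Real.log_pos (by norm_num)
  have hlog2lt : Real.log 2 < 1 := by
    have := Real.log_two_lt_d9
    linarith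
  have hL : Real.log 2 ≤ Real.log (4 * C1) :=
    Real.log_le_log (by norm_num) (by nlinarith)
  have hLpos : 0 < Real.log (4 * C1) := lt_of_lt_of_le hlog2pos hL
  set D : ℝ := 5 / 2 + Real.log (4 * C1) - Real.log 2 with hD
  have hDpos : 0 < D := by simp only [hD]; linarith
  set lam : ℝ := (1 - Real.log 2) / D with hlamdef
  have hlam0 : 0 < lam := div_pos (by linarith) hDpos
  have hlam1 : lam < 1 := by
    rw [hlamdef, div_lt_one hDpos]
    simp only [hD]; linarith
  have hlamD : lam * D = 1 - Real.log 2 := by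
    rw [hlamdef]; field_simp
  refine ⟨2 / lam, by positivity, ?_⟩
  intro n Ω _ _ X z p hX hconv hunc hz hnp hP
  have hp0 : (0:ℝ) ≤ p := le_trans (by positivity) hnp
  -- Step A: P(∀ i, 0 ≤ X i) ≥ 2⁻ⁿ
  have hmeasOct : MeasurableSet {u : Fin n → ℝ | ∀ i, 0 ≤ u i} := by
    have : {u : Fin n → ℝ | ∀ i, 0 ≤ u i} = ⋂ i, (fun u : Fin n → ℝ => u i) ⁻¹' Set.Ici 0 := by
      ext u; simp [Set.mem_iInter]
    rw [this]
    exact MeasurableSet.iInter fun i => (measurable_pi_apply i) measurableSet_Ici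
  have heq : ∀ s : Fin n → Bool,
      ℙ {ω | ∀ i, 0 ≤ (if s i then (1:ℝ) else -1) * X ω i} = ℙ {ω | ∀ i, (0:ℝ) ≤ X ω i} := by
    intro s
    set ε : Fin n → ℝ := fun i => if s i then (1:ℝ) else -1 with hε
    have hεpm : ∀ i, ε i = 1 ∨ ε i = -1 := fun i => by
      by_cases h : s i <;> simp [hε, h]
    have hmap := hunc ε hεpm
    have hmeasε : Measurable fun ω => fun i => ε i * X ω i :=
      measurable_pi_lambda _ fun i => (measurable_const.mul ((measurable_pi_apply i).comp hX))
    have h1 : ℙ {ω | ∀ i, 0 ≤ ε i * X ω i}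
        = (Measure.map (fun ω i => ε i * X ω i) ℙ) {u | ∀ i, 0 ≤ u i} := by
      rw [Measure.map_apply hmeasε hmeasOct]; rfl
    have h2 : (Measure.map X ℙ) {u : Fin n → ℝ | ∀ i, 0 ≤ u i}
        = ℙ {ω | ∀ i, (0:ℝ) ≤ X ω i} := by
      rw [Measure.map_apply hX hmeasOct]; rfl
    rw [← h2, ← hmap, ← h1]
  have hcover : (Set.univ : Set Ω)
      ⊆ ⋃ s : Fin n → Bool, {ω | ∀ i, 0 ≤ (if s i then (1:ℝ) else -1) * X ω i} := by
    intro ω _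
    simp only [Set.mem_iUnion, Set.mem_setOf_eq]
    refine ⟨fun i => decide (0 ≤ X ω i), fun i => ?_⟩
    show 0 ≤ (if decide (0 ≤ X ω i) = true then (1:ℝ) else -1) * X ω i
    rcases le_or_gt 0 (X ω i) with h | h
    · rw [decide_eq_true h]; simpa using h
    · rw [decide_eq_false (not_le.2 h)]
      norm_num
      linarith
  have hA0 : (ℙ {ω | ∀ i, (0:ℝ) ≤ X ω i}) ≥ ENNReal.ofReal ((2:ℝ)⁻¹ ^ n) := by
    have h1 : (1 : ℝ≥0∞) ≤ (2:ℝ≥0∞) ^ n * ℙ {ω | ∀ i, (0:ℝ) ≤ X ω i} := by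
      calc (1 : ℝ≥0∞) = ℙ (Set.univ : Set Ω) := (measure_univ).symm
        _ ≤ ℙ (⋃ s : Fin n → Bool, {ω | ∀ i, 0 ≤ (if s i then (1:ℝ) else -1) * X ω i}) :=
            measure_mono hcover
        _ ≤ ∑' s : Fin n → Bool, ℙ {ω | ∀ i, 0 ≤ (if s i then (1:ℝ) else -1) * X ω i} :=
            measure_iUnion_le _
        _ = ∑ s : Fin n → Bool, ℙ {ω | ∀ i, 0 ≤ (if s i then (1:ℝ) else -1) * X ω i} :=
            tsum_fintype _
        _ = ∑ s : Fin n → Bool, ℙ {ω | ∀ i, (0:ℝ) ≤ X ω i} := by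
            exact Finset.sum_congr rfl fun s _ => heq s
        _ = (2:ℝ≥0∞) ^ n * ℙ {ω | ∀ i, (0:ℝ) ≤ X ω i} := by
            rw [Finset.sum_const, Finset.card_univ]
            simp [Fintype.card_fun, nsmul_eq_mul]
    have h2n : ((2:ℝ≥0∞) ^ n) ≠ 0 := by positivity
    have h2ntop : ((2:ℝ≥0∞) ^ n) ≠ ⊤ := by
      exact ENNReal.pow_ne_top (by norm_num)
    have : ((2:ℝ≥0∞) ^ n)⁻¹ ≤ ℙ {ω | ∀ i, (0:ℝ) ≤ X ω i} := by
      calc ((2:ℝ≥0∞) ^ n)⁻¹ = ((2:ℝ≥0∞) ^ n)⁻¹ * 1 := (mul_one _).symm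
        _ ≤ ((2:ℝ≥0∞) ^ n)⁻¹ * ((2:ℝ≥0∞) ^ n * ℙ {ω | ∀ i, (0:ℝ) ≤ X ω i}) :=
            mul_le_mul_right h1 _
        _ = ℙ {ω | ∀ i, (0:ℝ) ≤ X ω i} := by
            rw [← mul_assoc, ENNReal.inv_mul_cancel h2n h2ntop, one_mul]
    refine le_trans (le_of_eq ?_) this
    rw [ENNReal.inv_pow, ENNReal.ofReal_pow (by norm_num : (0:ℝ) ≤ 2⁻¹)]
    congr 1
    rw [ENNReal.ofReal_inv_of_pos (by norm_num : (0:ℝ) < 2)]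
    norm_num
  -- toReal facts
  have htopA : ℙ {ω | ∀ i, (0:ℝ) ≤ X ω i} ≠ ⊤ := measure_ne_top _ _
  have hA0r : (2:ℝ)⁻¹ ^ n ≤ (ℙ {ω | ∀ i, (0:ℝ) ≤ X ω i}).toReal := by
    have := ENNReal.toReal_mono htopA hA0
    rwa [ENNReal.toReal_ofReal (by positivity)] at this
  have hA0pos : 0 < (ℙ {ω | ∀ i, (0:ℝ) ≤ X ω i}).toReal :=
    lt_of_lt_of_le (by positivity) hA0r
  have hPz : Real.exp (-(5 * p / 2)) * (4 * C1)⁻¹ ^ n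
      ≤ (ℙ {ω | ∀ i, z i / 2 ≤ X ω i}).toReal := by
    have := ENNReal.toReal_mono (measure_ne_top _ _) hP
    rwa [ENNReal.toReal_ofReal (by positivity)] at this
  have hPzpos : 0 < (ℙ {ω | ∀ i, z i / 2 ≤ X ω i}).toReal :=
    lt_of_lt_of_le (by positivity) hPz
  -- bounds on g at the two endpoints
  set g : (Fin n → ℝ) → ℝ :=
    fun u : Fin n → ℝ => -Real.log (ℙ {ω | ∀ i, u i ≤ X ω i}).toReal with hg
  have hg0 : g 0 ≤ n * Real.log 2 := by
    have : -Real.log (ℙ {ω | ∀ i, (0:ℝ) ≤ X ω i}).toReal ≤ n * Real.log 2 := by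
      have hlog := Real.log_le_log (by positivity) hA0r
      rw [Real.log_pow, Real.log_inv] at hlog
      linarith
    simpa [hg] using this
  have hgz : g (fun i => z i / 2) ≤ 5 * p / 2 + n * Real.log (4 * C1) := by
    have hlog := Real.log_le_log (by positivity) hPz
    rw [Real.log_mul (by positivity) (by positivity), Real.log_exp, Real.log_pow,
      Real.log_inv] at hlog
    simp only [hg]
    linarith
  -- convexity
  have hconvx := hconv.2 (Set.mem_univ (fun i => z i / 2)) (Set.mem_univ (0 : Fin n → ℝ))
    hlam0.le (by linarith : (0:ℝ) ≤ 1 - lam) (by ring)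
  have hkey : g (fun i => lam * (z i / 2)) ≤ p := by
    have heqpt : (lam • (fun i => z i / 2) + (1 - lam) • (0 : Fin n → ℝ))
        = fun i => lam * (z i / 2) := by
      funext i; simp
    rw [heqpt] at hconvx
    have hcomb : lam * (5 * p / 2 + n * Real.log (4 * C1))
        + (1 - lam) * (n * Real.log 2) ≤ p := by
      have e1 : lam * Real.log (4 * C1) * n ≤ lam * Real.log (4 * C1) * p :=
        mul_le_mul_of_nonneg_left hnp (mul_nonneg hlam0.le hLpos.le)
      have e2 : (1 - lam) * Real.log 2 * n ≤ (1 - lam) * Real.log 2 * p :=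
        mul_le_mul_of_nonneg_left hnp (mul_nonneg (by linarith) hlog2pos.le)
      have e3 : p * (lam * (5 / 2 + Real.log (4 * C1) - Real.log 2))
          = p * (1 - Real.log 2) := by rw [← hD, hlamD]
      have e4 : lam * p ≤ lam * p := le_refl _
      nlinarith [e1, e2, e3, e4]
    calc g (fun i => lam * (z i / 2)) ≤ lam * g (fun i => z i / 2) + (1 - lam) * g 0 := by
          simpa [smul_eq_mul] using hconvx
      _ ≤ lam * (5 * p / 2 + n * Real.log (4 * C1)) + (1 - lam) * (n * Real.log 2) :=
          add_le_add (mul_le_mul_of_nonneg_left hgz hlam0.le)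
            (mul_le_mul_of_nonneg_left hg0 (by linarith : (0:ℝ) ≤ 1 - lam))
      _ ≤ p := hcomb
  -- positivity of the interpolated set
  have hsub1 : {ω | ∀ i, z i / 2 ≤ X ω i} ⊆ {ω | ∀ i, lam * (z i / 2) ≤ X ω i} := by
    intro ω hω i
    have := hω i
    nlinarith [hz i]
  have hmidpos : 0 < (ℙ {ω | ∀ i, lam * (z i / 2) ≤ X ω i}).toReal := by
    refine lt_of_lt_of_le hPzpos (ENNReal.toReal_mono (measure_ne_top _ _) ?_)
    exact measure_mono hsub1
  have hexp : Real.exp (-p) ≤ (ℙ {ω | ∀ i, lam * (z i / 2) ≤ X ω i}).toReal := by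
    have hlogge : -p ≤ Real.log (ℙ {ω | ∀ i, lam * (z i / 2) ≤ X ω i}).toReal := by
      have : g (fun i => lam * (z i / 2))
          = -Real.log (ℙ {ω | ∀ i, lam * (z i / 2) ≤ X ω i}).toReal := rfl
      rw [this] at hkey
      linarith
    calc Real.exp (-p) ≤ Real.exp (Real.log (ℙ {ω | ∀ i, lam * (z i / 2) ≤ X ω i}).toReal) :=
          Real.exp_le_exp.2 hlogge
      _ = _ := Real.exp_log hmidpos
  -- conclude
  have hsub2 : {ω | ∀ i, lam * (z i / 2) ≤ X ω i} ⊆ {ω | ∀ i, (2 / lam)⁻¹ * z i ≤ |X ω i|} := by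
    intro ω hω i
    have h1 := hω i
    have h2 : (2 / lam)⁻¹ * z i = lam * (z i / 2) := by
      field_simp
    rw [h2]
    exact le_trans h1 (le_abs_self _)
  calc ENNReal.ofReal (Real.exp (-p))
      ≤ ENNReal.ofReal (ℙ {ω | ∀ i, lam * (z i / 2) ≤ X ω i}).toReal :=
        ENNReal.ofReal_le_ofReal hexp
    _ = ℙ {ω | ∀ i, lam * (z i / 2) ≤ X ω i} := ENNReal.ofReal_toReal (measure_ne_top _ _)
    _ ≤ ℙ {ω | ∀ i, (2 / lam)⁻¹ * z i ≤ |X ω i|} := measure_mono hsub2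
end
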